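/- arXiv:2404.15378 — 3 statements merged into one kernel-verified Lean document; each statement's English description precedes it below -/
import Mathlib

section
/- Let d1, d2 ≥ 1, let Ω be a measurable parameter space, and let g : ℝ^{d1} × Ω → ℝ be measurable such that the associated generalized Radon transform is injective on finite complex Borel measures, i.e., whenever two finite complex Borel measures ρ1, ρ2 on ℝ^{d1} satisfy g(·,θ)♯ρ1 = g(·,θ)♯ρ2 for all θ ∈ Ω, then ρ1 = ρ2. Then the Partial Generalized Radon Transform with defining function g is injective on finite Borel measures: if μ, ν are finite Borel measures on ℝ^{d1} × ℝ^{d2} such that the pushforwards of μ and ν under the map (x, y) ↦ (g(x, θ), y) ∈ ℝ × ℝ^{d2} coincide for every θ ∈ Ω, then μ = ν. -/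
open MeasureTheory ENNReal
open scoped RealInnerProductSpace

noncomputable section

/-- `Euc d` is the Euclidean space `ℝ^d`. -/
abbrev Euc (d : ℕ) := EuclideanSpace ℝ (Fin d)

/-!
Fix a measurable `B ⊆ ℝ^{d2}` and the finite measure `A ↦ μ (A ×ˢ B)` on `ℝ^{d1}`. Its
generalized Radon slice along `θ` is `s ↦ μ ({g(·,θ) ∈ s} ×ˢ B)`, the value of the partial
transform of `μ` on `s ×ˢ B`. So the hypothesis makes the slices of the `μ`- and `ν`-versions
agree, injectivity of the generalized Radon transform (on them as complex measures) gives
`μ (A ×ˢ B) = ν (A ×ˢ B)` for all rectangles, and finite measures on a product are determined by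
their values on rectangles.
-/

namespace MeasureTheory

variable {α β γ : Type*} [MeasurableSpace α] [MeasurableSpace β] [MeasurableSpace γ]

def Measure.toComplexMeasure (μ : Measure α) [IsFiniteMeasure μ] : ComplexMeasure α :=
  μ.toSignedMeasure.toComplexMeasure 0

theorem Measure.toComplexMeasure_apply_measurable {μ : Measure α} [IsFiniteMeasure μ]
    {s : Set α} (hs : MeasurableSet s) : μ.toComplexMeasure s = μ.real s := by
  simp [Measure.toComplexMeasure, SignedMeasure.toComplexMeasure_apply,
    Measure.toSignedMeasure_apply_measurable hs, Complex.ext_iff]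

theorem Measure.toComplexMeasure_inj {μ ν : Measure α} [IsFiniteMeasure μ]
    [IsFiniteMeasure ν] : μ.toComplexMeasure = ν.toComplexMeasure ↔ μ = ν := by
  refine ⟨fun h => ?_, fun h => by subst h; rfl⟩
  have hre := congrArg ComplexMeasure.re h
  simp only [Measure.toComplexMeasure, SignedMeasure.re_toComplexMeasure] at hre
  exact Measure.toSignedMeasure_eq_toSignedMeasure_iff.mp hre

theorem Measure.toComplexMeasure_map {μ : Measure α} [IsFiniteMeasure μ] {f : α → β}
    (hf : Measurable f) : μ.toComplexMeasure.map f = (μ.map f).toComplexMeasure := by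
  ext s hs
  rw [VectorMeasure.map_apply _ hf hs, Measure.toComplexMeasure_apply_measurable (hf hs),
    Measure.toComplexMeasure_apply_measurable hs, map_measureReal_apply hf hs]

theorem Measure.fst_restrict_snd_preimage_apply (κ : Measure (α × β)) {B : Set β}
    {A : Set α} (hA : MeasurableSet A) :
    (κ.restrict (Prod.snd ⁻¹' B)).fst A = κ (A ×ˢ B) := by
  rw [Measure.fst_apply hA, Measure.restrict_apply (measurable_fst hA), Set.prod_eq]

theorem Measure.fst_restrict_snd_preimage_map (κ : Measure (α × β)) {B : Set β}
    (hB : MeasurableSet B) {f : α → γ} (hf : Measurable f) :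
    (κ.restrict (Prod.snd ⁻¹' B)).fst.map f
      = ((κ.map fun z => (f z.1, z.2)).restrict (Prod.snd ⁻¹' B)).fst := by
  ext s hs
  have hF : Measurable fun z : α × β => (f z.1, z.2) :=
    (hf.comp measurable_fst).prodMk measurable_snd
  rw [Measure.map_apply hf hs, fst_restrict_snd_preimage_apply _ (hf hs),
    fst_restrict_snd_preimage_apply _ hs, Measure.map_apply hF (hs.prod hB)]
  rfl

theorem Measure.ext_of_fst_restrict_snd_preimage {μ ν : Measure (α × β)} [IsFiniteMeasure μ]
    (h : ∀ B, MeasurableSet B →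
      (μ.restrict (Prod.snd ⁻¹' B)).fst = (ν.restrict (Prod.snd ⁻¹' B)).fst) :
    μ = ν :=
  Measure.ext_prod fun {A B} hA hB => by
    rw [← fst_restrict_snd_preimage_apply _ hA, h B hB, fst_restrict_snd_preimage_apply _ hA]

end MeasureTheory

theorem partial_generalized_radon_transform_injective_general (d1 d2 : ℕ)
    {Ω : Type*} [MeasurableSpace Ω] (g : Euc d1 → Ω → ℝ)
    (hg : Measurable (Function.uncurry g))
    (hinj : ∀ ρ1 ρ2 : ComplexMeasure (Euc d1),
      (∀ θ : Ω, ρ1.map (fun x => g x θ) = ρ2.map (fun x => g x θ)) → ρ1 = ρ2)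
    (μ ν : Measure (Euc d1 × Euc d2)) [IsFiniteMeasure μ] [IsFiniteMeasure ν]
    (h : ∀ θ : Ω,
      μ.map (fun z : Euc d1 × Euc d2 => (g z.1 θ, z.2))
        = ν.map (fun z : Euc d1 × Euc d2 => (g z.1 θ, z.2))) :
    μ = ν := by
  refine Measure.ext_of_fst_restrict_snd_preimage fun B hB => ?_
  rw [← Measure.toComplexMeasure_inj]
  refine hinj _ _ fun θ => ?_
  have hgθ : Measurable fun x => g x θ := hg.of_uncurry_right
  rw [Measure.toComplexMeasure_map hgθ, Measure.toComplexMeasure_map hgθ,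
    Measure.toComplexMeasure_inj, Measure.fst_restrict_snd_preimage_map _ hB hgθ,
    Measure.fst_restrict_snd_preimage_map _ hB hgθ, h θ]

/-- **Injectivity of the Partial Generalized Radon Transform** (Proposition 1):
if the generalized Radon transform with defining function `g` is injective on finite
complex Borel measures, then the partial generalized Radon transform
`(x, y) ↦ (g(x, θ), y)` is injective on finite Borel measures on `ℝ^{d1} × ℝ^{d2}`. -/
theorem partial_generalized_radon_transform_injective (d1 d2 : ℕ) (hd1 : 1 ≤ d1) (hd2 : 1 ≤ d2)
    {Ω : Type*} [MeasurableSpace Ω] (g : Euc d1 → Ω → ℝ)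
    (hg : Measurable (Function.uncurry g))
    (hinj : ∀ ρ1 ρ2 : ComplexMeasure (Euc d1),
      (∀ θ : Ω, ρ1.map (fun x => g x θ) = ρ2.map (fun x => g x θ)) → ρ1 = ρ2)
    (μ ν : Measure (Euc d1 × Euc d2)) [IsFiniteMeasure μ] [IsFiniteMeasure ν]
    (h : ∀ θ : Ω,
      μ.map (fun z : Euc d1 × Euc d2 => (g z.1 θ, z.2))
        = ν.map (fun z : Euc d1 × Euc d2 => (g z.1 θ, z.2))) :
    μ = ν :=
  partial_generalized_radon_transform_injective_general d1 d2 g hg hinj μ ν h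
end
end

section
/- Let d1, d2 ≥ 1 and let μ, ν be finite Borel measures on ℝ^{d1} × ℝ^{d2}. If for every θ1 ∈ S^{d1−1}, θ2 ∈ S^{d2−1} and ψ = (ψ1, ψ2) ∈ S^1 the pushforwards of μ and ν under the map (x1, x2) ↦ ψ1 ⟨x1, θ1⟩ + ψ2 ⟨x2, θ2⟩ coincide, then μ = ν. (Injectivity of the Hierarchical Hybrid Radon Transform with linear defining functions.) -/
/-!
A finite measure on a Banach space is determined by its one-dimensional projections `μ.map L`
(Cramér–Wold), since the characteristic function at `L` is that of `μ.map L` at `1`. On a product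
of inner product spaces every such `L` is `(x1, x2) ↦ ⟪x1, u1⟫ + ⟪x2, u2⟫`; writing `u1 = a θ1`,
`u2 = b θ2` with unit `θ1, θ2` and `(a, b) = r (ψ1, ψ2)` in polar coordinates shows that `L` is
`r` times an HHRT slice map, so `μ.map L` is the image of an HHRT slice under `t ↦ r t`.
-/

open MeasureTheory ENNReal
open scoped RealInnerProductSpace

noncomputable section

theorem Measure.ext_of_map_strongDual {E : Type*} [NormedAddCommGroup E] [NormedSpace ℝ E]
    [CompleteSpace E] [MeasurableSpace E] [BorelSpace E] [SecondCountableTopology E]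
    {μ ν : Measure E} [IsFiniteMeasure μ] [IsFiniteMeasure ν]
    (h : ∀ L : StrongDual ℝ E, μ.map L = ν.map L) : μ = ν :=
  Measure.ext_of_charFunDual <| funext fun L => by
    rw [charFunDual_eq_charFun_map_one, charFunDual_eq_charFun_map_one, h]

theorem Measure.ext_of_map_inner_add_inner {E F : Type*} [NormedAddCommGroup E]
    [InnerProductSpace ℝ E] [CompleteSpace E] [MeasurableSpace E] [BorelSpace E]
    [SecondCountableTopology E] [NormedAddCommGroup F] [InnerProductSpace ℝ F] [CompleteSpace F]
    [MeasurableSpace F] [BorelSpace F] [SecondCountableTopology F]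
    {μ ν : Measure (E × F)} [IsFiniteMeasure μ] [IsFiniteMeasure ν]
    (h : ∀ (u1 : E) (u2 : F), μ.map (fun z => ⟪z.1, u1⟫ + ⟪z.2, u2⟫)
      = ν.map (fun z => ⟪z.1, u1⟫ + ⟪z.2, u2⟫)) :
    μ = ν := by
  refine Measure.ext_of_map_strongDual fun L => ?_
  have hL : ⇑L = fun z => ⟪z.1, (InnerProductSpace.toDual ℝ E).symm (L.comp (.inl ℝ E F))⟫
      + ⟪z.2, (InnerProductSpace.toDual ℝ F).symm (L.comp (.inr ℝ E F))⟫ := by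
    funext z
    rw [real_inner_comm _ z.1, real_inner_comm _ z.2, InnerProductSpace.toDual_symm_apply,
      InnerProductSpace.toDual_symm_apply, L.comp_inl_add_comp_inr]
  rw [hL, h]

theorem exists_norm_eq_one_and_eq_smul {E : Type*} [NormedAddCommGroup E] [NormedSpace ℝ E]
    [Nontrivial E] (u : E) : ∃ (a : ℝ) (θ : E), ‖θ‖ = 1 ∧ u = a • θ := by
  rcases eq_or_ne u 0 with rfl | hu
  · obtain ⟨θ, hθ⟩ := exists_norm_eq E zero_le_one
    exact ⟨0, θ, hθ, (zero_smul ℝ θ).symm⟩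
  · refine ⟨‖u‖, ‖u‖⁻¹ • u, norm_smul_inv_norm hu, ?_⟩
    rw [smul_smul, mul_inv_cancel₀ (norm_ne_zero_iff.mpr hu), one_smul]

theorem exists_polar_coords (a b : ℝ) :
    ∃ r ψ1 ψ2 : ℝ, ψ1 ^ 2 + ψ2 ^ 2 = 1 ∧ a = r * ψ1 ∧ b = r * ψ2 :=
  ⟨‖(⟨a, b⟩ : ℂ)‖, Real.cos (Complex.arg ⟨a, b⟩), Real.sin (Complex.arg ⟨a, b⟩),
    Real.cos_sq_add_sin_sq _, (Complex.norm_mul_cos_arg ⟨a, b⟩).symm,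
    (Complex.norm_mul_sin_arg ⟨a, b⟩).symm⟩

theorem Measure.ext_of_map_hybrid_slice {E F : Type*} [NormedAddCommGroup E]
    [InnerProductSpace ℝ E] [CompleteSpace E] [MeasurableSpace E] [BorelSpace E]
    [SecondCountableTopology E] [Nontrivial E] [NormedAddCommGroup F] [InnerProductSpace ℝ F]
    [CompleteSpace F] [MeasurableSpace F] [BorelSpace F] [SecondCountableTopology F]
    [Nontrivial F] {μ ν : Measure (E × F)} [IsFiniteMeasure μ] [IsFiniteMeasure ν]
    (h : ∀ θ1 : E, ‖θ1‖ = 1 → ∀ θ2 : F, ‖θ2‖ = 1 → ∀ ψ1 ψ2 : ℝ, ψ1 ^ 2 + ψ2 ^ 2 = 1 →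
      μ.map (fun z => ψ1 * ⟪z.1, θ1⟫ + ψ2 * ⟪z.2, θ2⟫)
        = ν.map (fun z => ψ1 * ⟪z.1, θ1⟫ + ψ2 * ⟪z.2, θ2⟫)) :
    μ = ν := by
  refine Measure.ext_of_map_inner_add_inner fun u1 u2 => ?_
  obtain ⟨a, θ1, hθ1, rfl⟩ := exists_norm_eq_one_and_eq_smul u1
  obtain ⟨b, θ2, hθ2, rfl⟩ := exists_norm_eq_one_and_eq_smul u2
  obtain ⟨r, ψ1, ψ2, hψ, rfl, rfl⟩ := exists_polar_coords a b
  set slice := fun z : E × F => ψ1 * ⟪z.1, θ1⟫ + ψ2 * ⟪z.2, θ2⟫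
  have hslice : Measurable slice := by fun_prop
  have hscale : (fun z : E × F => ⟪z.1, (r * ψ1) • θ1⟫ + ⟪z.2, (r * ψ2) • θ2⟫)
      = (r * ·) ∘ slice := by
    funext z
    simp only [Function.comp_apply, slice, real_inner_smul_right]
    ring
  rw [hscale, ← Measure.map_map (measurable_const_mul r) hslice,
    ← Measure.map_map (measurable_const_mul r) hslice, h θ1 hθ1 θ2 hθ2 ψ1 ψ2 hψ]

/-- **Injectivity of the Hierarchical Hybrid Radon Transform with linear defining
functions**: if two finite Borel measures on `ℝ^{d1} × ℝ^{d2}` have equal pushforwards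
under `(x1, x2) ↦ ψ1 ⟨x1, θ1⟩ + ψ2 ⟨x2, θ2⟩` for all unit vectors `θ1 ∈ S^{d1-1}`,
`θ2 ∈ S^{d2-1}` and all `ψ = (ψ1, ψ2) ∈ S^1`, then they are equal. -/
theorem hhrt_linear_injective (d1 d2 : ℕ) (hd1 : 1 ≤ d1) (hd2 : 1 ≤ d2)
    (μ ν : Measure (Euc d1 × Euc d2)) [IsFiniteMeasure μ] [IsFiniteMeasure ν]
    (h : ∀ θ1 : Euc d1, ‖θ1‖ = 1 → ∀ θ2 : Euc d2, ‖θ2‖ = 1 →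
      ∀ ψ1 ψ2 : ℝ, ψ1 ^ 2 + ψ2 ^ 2 = 1 →
      μ.map (fun z : Euc d1 × Euc d2 => ψ1 * ⟪z.1, θ1⟫ + ψ2 * ⟪z.2, θ2⟫)
        = ν.map (fun z : Euc d1 × Euc d2 => ψ1 * ⟪z.1, θ1⟫ + ψ2 * ⟪z.2, θ2⟫)) :
    μ = ν := by
  have : Nonempty (Fin d1) := ⟨⟨0, hd1⟩⟩
  have : Nonempty (Fin d2) := ⟨⟨0, hd2⟩⟩
  exact Measure.ext_of_map_hybrid_slice h
end
end

section
/- For Borel probability measures μ, ν on ℝ^{d1} × ℝ^{d2} with finite first moments, the hierarchical hybrid sliced Wasserstein distance of order 1 with linear defining functions satisfies H2SW_1(μ, ν) ≤ W_1(μ, ν; c), where W_1(μ, ν; c) is the joint Wasserstein-1 distance with ground cost c((x1, x2), (y1, y2)) = ‖x1 − y1‖₂ + ‖x2 − y2‖₂. (Proposition 3(iii).) -/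
open MeasureTheory ENNReal
open scoped RealInnerProductSpace

noncomputable section

/-- Couplings of two measures: measures on the product with prescribed marginals. -/
def couplings {X Y : Type*} [MeasurableSpace X] [MeasurableSpace Y]
    (α : Measure X) (β : Measure Y) : Set (Measure (X × Y)) :=
  {π | π.map Prod.fst = α ∧ π.map Prod.snd = β}

/-- `W_p^p`: the `p`-th power of the Wasserstein distance, as an optimal transport cost. -/
def WpPow {X : Type*} [MeasurableSpace X] [EDist X] (p : ℝ) (α β : Measure X) : ℝ≥0∞ :=
  ⨅ π ∈ couplings α β, ∫⁻ z : X × X, edist z.1 z.2 ^ p ∂π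

/-- The Wasserstein distance of order `p`. -/
def Wp {X : Type*} [MeasurableSpace X] [EDist X] (p : ℝ) (α β : Measure X) : ℝ≥0∞ :=
  WpPow p α β ^ (1 / p)
/-- The uniform probability measure on the unit sphere of `ℝ^d`. -/
def sphereUniform (d : ℕ) : Measure (Metric.sphere (0 : Euc d) 1) :=
  ((volume : Measure (Euc d)).toSphere Set.univ)⁻¹ • (volume : Measure (Euc d)).toSphere
/-- The HHRT projection map `T_{θ1,θ2,ψ}(x1,x2) = ψ1 g1(x1,θ1) + ψ2 g2(x2,θ2)`. -/
def Tmap {d1 d2 : ℕ} {Ω1 Ω2 : Type*} (g1 : Euc d1 → Ω1 → ℝ) (g2 : Euc d2 → Ω2 → ℝ)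
    (θ1 : Ω1) (θ2 : Ω2) (ψ : Metric.sphere (0 : Euc 2) 1) (z : Euc d1 × Euc d2) : ℝ :=
  (ψ : Euc 2) 0 * g1 z.1 θ1 + (ψ : Euc 2) 1 * g2 z.2 θ2

/-- `H2SW_p^p`: the `p`-th power of the hierarchical hybrid sliced Wasserstein distance. -/
def H2SWpPow {d1 d2 : ℕ} {Ω1 Ω2 : Type*} [MeasurableSpace Ω1] [MeasurableSpace Ω2]
    (p : ℝ) (σ1 : Measure Ω1) (σ2 : Measure Ω2)
    (g1 : Euc d1 → Ω1 → ℝ) (g2 : Euc d2 → Ω2 → ℝ)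
    (μ ν : Measure (Euc d1 × Euc d2)) : ℝ≥0∞ :=
  ∫⁻ w : Ω1 × Ω2 × Metric.sphere (0 : Euc 2) 1,
    WpPow p (μ.map (Tmap g1 g2 w.1 w.2.1 w.2.2)) (ν.map (Tmap g1 g2 w.1 w.2.1 w.2.2))
    ∂(σ1.prod (σ2.prod (sphereUniform 2)))

/-- The hierarchical hybrid sliced Wasserstein distance of order `p`. -/
def H2SW {d1 d2 : ℕ} {Ω1 Ω2 : Type*} [MeasurableSpace Ω1] [MeasurableSpace Ω2]
    (p : ℝ) (σ1 : Measure Ω1) (σ2 : Measure Ω2)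
    (g1 : Euc d1 → Ω1 → ℝ) (g2 : Euc d2 → Ω2 → ℝ)
    (μ ν : Measure (Euc d1 × Euc d2)) : ℝ≥0∞ :=
  H2SWpPow p σ1 σ2 g1 g2 μ ν ^ (1 / p)

/-- The joint Wasserstein-1 distance on `ℝ^{d1} × ℝ^{d2}` with mixed ground cost
`c((x1,x2),(y1,y2)) = ‖x1 − y1‖₂ + ‖x2 − y2‖₂`. -/
def jointW1 {d1 d2 : ℕ} (μ ν : Measure (Euc d1 × Euc d2)) : ℝ≥0∞ :=
  ⨅ π ∈ couplings μ ν,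
    ∫⁻ z : (Euc d1 × Euc d2) × (Euc d1 × Euc d2),
      edist z.1.1 z.2.1 + edist z.1.2 z.2.2 ∂π

/-!
For a fixed slice `(θ1, θ2, ψ)` with `θ1, θ2, ψ` unit vectors, `T = Tmap …` satisfies
`|T x - T y| ≤ ‖x1 - y1‖ + ‖x2 - y2‖`, because `|ψ i| ≤ 1` and `|⟪v, θ⟫| ≤ ‖v‖`. Pushing a
coupling `π` of `μ, ν` forward by `T × T` therefore gives a coupling of the two slices whose
transport cost is at most the joint cost of `π`. Averaging this bound over the directions, a
measure of total mass at most one, and taking the infimum over `π` gives the theorem.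
-/

section Couplings

variable {X Y : Type*} [MeasurableSpace X] [MeasurableSpace Y]

lemma map_prodMap_mem_couplings {α β : Measure X} {π : Measure (X × X)}
    (hπ : π ∈ couplings α β) {f : X → Y} (hf : Measurable f) :
    π.map (Prod.map f f) ∈ couplings (α.map f) (β.map f) := by
  refine ⟨?_, ?_⟩
  · rw [Measure.map_map measurable_fst (hf.prodMap hf), ← hπ.1,
      Measure.map_map hf measurable_fst]
    rfl
  · rw [Measure.map_map measurable_snd (hf.prodMap hf), ← hπ.2,
      Measure.map_map hf measurable_snd]
    rfl

lemma WpPow_map_le_lintegral [EDist Y] (p : ℝ) {α β : Measure X} {π : Measure (X × X)}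
    (hπ : π ∈ couplings α β) {f : X → Y} (hf : Measurable f) :
    WpPow p (α.map f) (β.map f) ≤ ∫⁻ z, edist (f z.1) (f z.2) ^ p ∂π :=
  (iInf₂_le _ (map_prodMap_mem_couplings hπ hf)).trans (lintegral_map_le _ _)

end Couplings

lemma lintegral_const_le_of_measure_univ_le_one {Ω : Type*} [MeasurableSpace Ω]
    {σ : Measure Ω} (hσ : σ Set.univ ≤ 1) (c : ℝ≥0∞) : ∫⁻ _, c ∂σ ≤ c := by
  rw [lintegral_const]
  exact mul_le_of_le_one_right' hσ

lemma Measure.prod_univ_le_one {Ω₁ Ω₂ : Type*} [MeasurableSpace Ω₁] [MeasurableSpace Ω₂]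
    {σ₁ : Measure Ω₁} {σ₂ : Measure Ω₂} [SFinite σ₂] (h₁ : σ₁ Set.univ ≤ 1)
    (h₂ : σ₂ Set.univ ≤ 1) : σ₁.prod σ₂ Set.univ ≤ 1 := by
  rw [← Set.univ_prod_univ, Measure.prod_prod]
  exact mul_le_one' h₁ h₂

lemma measure_univ_sphereUniform_le_one (d : ℕ) : sphereUniform d Set.univ ≤ 1 := by
  rw [sphereUniform, Measure.smul_apply, smul_eq_mul]
  exact ENNReal.inv_mul_le_one _

instance (d : ℕ) : IsFiniteMeasure (sphereUniform d) :=
  ⟨(measure_univ_sphereUniform_le_one d).trans_lt one_lt_top⟩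

lemma abs_apply_le_one_of_mem_sphere {n : ℕ} (ψ : Metric.sphere (0 : Euc n) 1) (i : Fin n) :
    |(ψ : Euc n) i| ≤ 1 := by
  simpa [norm_eq_of_mem_sphere] using PiLp.norm_apply_le (ψ : Euc n) i

lemma lipschitzWith_one_inner_left_of_mem_sphere {E : Type*} [NormedAddCommGroup E]
    [InnerProductSpace ℝ E] (θ : Metric.sphere (0 : E) 1) :
    LipschitzWith 1 (fun x : E => ⟪x, (θ : E)⟫) :=
  LipschitzWith.of_dist_le_mul fun x y => by
    rw [Real.dist_eq, ← inner_sub_left, dist_eq_norm, NNReal.coe_one, one_mul]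
    simpa [norm_eq_of_mem_sphere] using abs_real_inner_le_norm (x - y) (θ : E)

section Slicing

variable {d1 d2 : ℕ} {Ω1 Ω2 : Type*} {g1 : Euc d1 → Ω1 → ℝ} {g2 : Euc d2 → Ω2 → ℝ}
  {θ1 : Ω1} {θ2 : Ω2}

lemma continuous_Tmap (hg1 : Continuous (g1 · θ1)) (hg2 : Continuous (g2 · θ2))
    (ψ : Metric.sphere (0 : Euc 2) 1) : Continuous (Tmap g1 g2 θ1 θ2 ψ) :=
  (continuous_const.mul (hg1.comp continuous_fst)).add
    (continuous_const.mul (hg2.comp continuous_snd))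

lemma dist_Tmap_le (hg1 : LipschitzWith 1 (g1 · θ1)) (hg2 : LipschitzWith 1 (g2 · θ2))
    (ψ : Metric.sphere (0 : Euc 2) 1) (x y : Euc d1 × Euc d2) :
    dist (Tmap g1 g2 θ1 θ2 ψ x) (Tmap g1 g2 θ1 θ2 ψ y) ≤ dist x.1 y.1 + dist x.2 y.2 := by
  have h1 := hg1.dist_le_mul x.1 y.1
  have h2 := hg2.dist_le_mul x.2 y.2
  rw [NNReal.coe_one, one_mul] at h1 h2
  calc dist (Tmap g1 g2 θ1 θ2 ψ x) (Tmap g1 g2 θ1 θ2 ψ y)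
      ≤ dist ((ψ : Euc 2) 0 * g1 x.1 θ1) ((ψ : Euc 2) 0 * g1 y.1 θ1)
        + dist ((ψ : Euc 2) 1 * g2 x.2 θ2) ((ψ : Euc 2) 1 * g2 y.2 θ2) :=
      dist_add_add_le _ _ _ _
    _ = |(ψ : Euc 2) 0| * dist (g1 x.1 θ1) (g1 y.1 θ1)
        + |(ψ : Euc 2) 1| * dist (g2 x.2 θ2) (g2 y.2 θ2) := by
      simp only [Real.dist_eq, ← mul_sub, abs_mul]
    _ ≤ 1 * dist x.1 y.1 + 1 * dist x.2 y.2 := by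
      gcongr
      · exact abs_apply_le_one_of_mem_sphere ψ 0
      · exact abs_apply_le_one_of_mem_sphere ψ 1
    _ = dist x.1 y.1 + dist x.2 y.2 := by ring

lemma WpPow_one_map_Tmap_le {μ ν : Measure (Euc d1 × Euc d2)}
    {π : Measure ((Euc d1 × Euc d2) × (Euc d1 × Euc d2))} (hπ : π ∈ couplings μ ν)
    (hg1 : LipschitzWith 1 (g1 · θ1)) (hg2 : LipschitzWith 1 (g2 · θ2))
    (ψ : Metric.sphere (0 : Euc 2) 1) :
    WpPow 1 (μ.map (Tmap g1 g2 θ1 θ2 ψ)) (ν.map (Tmap g1 g2 θ1 θ2 ψ))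
      ≤ ∫⁻ z, edist z.1.1 z.2.1 + edist z.1.2 z.2.2 ∂π := by
  refine (WpPow_map_le_lintegral 1 hπ
    (continuous_Tmap hg1.continuous hg2.continuous ψ).measurable).trans
    (lintegral_mono fun z => ?_)
  rw [ENNReal.rpow_one, edist_dist, edist_dist, edist_dist,
    ← ENNReal.ofReal_add dist_nonneg dist_nonneg]
  exact ENNReal.ofReal_le_ofReal (dist_Tmap_le hg1 hg2 ψ z.1 z.2)

variable [MeasurableSpace Ω1] [MeasurableSpace Ω2] {σ1 : Measure Ω1} {σ2 : Measure Ω2}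

lemma H2SWpPow_le_of_forall_le [SFinite σ2] (hσ1 : σ1 Set.univ ≤ 1) (hσ2 : σ2 Set.univ ≤ 1)
    {p : ℝ} {μ ν : Measure (Euc d1 × Euc d2)} {C : ℝ≥0∞}
    (h : ∀ θ1 θ2 ψ, WpPow p (μ.map (Tmap g1 g2 θ1 θ2 ψ)) (ν.map (Tmap g1 g2 θ1 θ2 ψ)) ≤ C) :
    H2SWpPow p σ1 σ2 g1 g2 μ ν ≤ C := by
  rw [H2SWpPow]
  refine (lintegral_mono fun w => ?_).trans (lintegral_const_le_of_measure_univ_le_one ?_ C)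
  · exact h w.1 w.2.1 w.2.2
  · exact Measure.prod_univ_le_one hσ1
      (Measure.prod_univ_le_one hσ2 (measure_univ_sphereUniform_le_one 2))

theorem H2SW_one_le_jointW1_of_lipschitzWith [SFinite σ2]
    (hg1 : ∀ θ1, LipschitzWith 1 (g1 · θ1)) (hg2 : ∀ θ2, LipschitzWith 1 (g2 · θ2))
    (hσ1 : σ1 Set.univ ≤ 1) (hσ2 : σ2 Set.univ ≤ 1) (μ ν : Measure (Euc d1 × Euc d2)) :
    H2SW 1 σ1 σ2 g1 g2 μ ν ≤ jointW1 μ ν := by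
  rw [H2SW, div_one, ENNReal.rpow_one]
  exact le_iInf₂ fun π hπ => H2SWpPow_le_of_forall_le hσ1 hσ2 fun θ1 θ2 ψ =>
    WpPow_one_map_Tmap_le hπ (hg1 θ1) (hg2 θ2) ψ

end Slicing

theorem h2sw_one_le_joint_wasserstein_general (d1 d2 : ℕ)
    (μ ν : Measure (Euc d1 × Euc d2)) :
    H2SW 1 (sphereUniform d1) (sphereUniform d2)
        (fun x θ => ⟪x, (θ : Euc d1)⟫) (fun x θ => ⟪x, (θ : Euc d2)⟫) μ ν
      ≤ jointW1 μ ν :=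
  H2SW_one_le_jointW1_of_lipschitzWith lipschitzWith_one_inner_left_of_mem_sphere
    lipschitzWith_one_inner_left_of_mem_sphere (measure_univ_sphereUniform_le_one d1)
    (measure_univ_sphereUniform_le_one d2) μ ν

/-- **Proposition 3(iii)**: for Borel probability measures `μ, ν` on `ℝ^{d1} × ℝ^{d2}`
with finite first moments, the H2SW distance of order 1 with linear defining functions is
bounded by the joint Wasserstein-1 distance with ground cost
`c((x1,x2),(y1,y2)) = ‖x1 − y1‖₂ + ‖x2 − y2‖₂`. -/
theorem h2sw_one_le_joint_wasserstein (d1 d2 : ℕ) (hd1 : 1 ≤ d1) (hd2 : 1 ≤ d2)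
    (μ ν : Measure (Euc d1 × Euc d2))
    [IsProbabilityMeasure μ] [IsProbabilityMeasure ν]
    (hmom : ∀ κ ∈ ({μ, ν} : Set (Measure (Euc d1 × Euc d2))),
      ∫⁻ z : Euc d1 × Euc d2, ENNReal.ofReal (‖z.1‖ + ‖z.2‖) ∂κ < ⊤) :
    H2SW 1 (sphereUniform d1) (sphereUniform d2)
        (fun x θ => ⟪x, (θ : Euc d1)⟫) (fun x θ => ⟪x, (θ : Euc d2)⟫) μ ν
      ≤ jointW1 μ ν :=
  h2sw_one_le_joint_wasserstein_general d1 d2 μ ν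
end
end
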